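/- In the polynomial ring R = k[x_2,...,x_{n-1}] (n ≥ 7), let J = (x_2, x_3x_4, x_4x_5, ..., x_{n-2}x_{n-1}) and L = (x_2x_3, x_3x_4, ..., x_{n-3}x_{n-2}, x_{n-1}). Then J ∩ L = (x_2x_3, x_3x_4, ..., x_{n-2}x_{n-1}, x_2x_{n-1}), which is the edge ideal of a cycle of length n−2 on the vertices x_2,...,x_{n-1}. -/

import Mathlib

/-!
For adjacent vertices `u, v` of any graph `G`, the ideals `(x_u) + I(G - u)` and
`(x_v) + I(G - v)` both contain `I(G)`, and their intersection is generated by the lcms of pairs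
of generators; each such lcm is divisible by an edge monomial, the lcm `x_u x_v` of `x_u` and
`x_v` being the edge `uv` itself. `J` and `L` are these two ideals for the cycle
`x₂ — x₃ — ⋯ — x_{n-1} — x₂` and its edge `x₂ x_{n-1}`.
-/

open MvPolynomial

noncomputable def edgeIdeal (k : Type*) [Field k] {V : Type*} (G : SimpleGraph V) :
    Ideal (MvPolynomial V k) :=
  Ideal.span {p | ∃ u v : V, G.Adj u v ∧ p = X u * X v}

theorem Finsupp.single_add_single_eq_sup {σ : Type*} {a b : σ} (hab : a ≠ b) (m n : ℕ) :
    single a m + single b n = single a m ⊔ single b n := by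
  classical
  ext x
  simp only [add_apply, sup_apply, single_apply]
  split_ifs with hxa hxb <;> first | omega | exact absurd (hxa.trans hxb.symm) hab

namespace MvPolynomial

variable {σ R : Type*} [CommSemiring R]

theorem X_mul_X_eq_monomial (a b : σ) :
    (X a * X b : MvPolynomial σ R) = monomial (Finsupp.single a 1 + Finsupp.single b 1) 1 := by
  rw [X, X, monomial_mul, one_mul]

theorem span_monomial_inf_span_monomial_le {s t u : Set (σ →₀ ℕ)}
    (h : ∀ a ∈ s, ∀ b ∈ t, ∃ c ∈ u, c ≤ a ⊔ b) :
    Ideal.span ((monomial · (1 : R)) '' s) ⊓ Ideal.span ((monomial · 1) '' t) ≤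
      Ideal.span ((monomial · 1) '' u) := by
  intro p hp
  rw [Submodule.mem_inf, mem_ideal_span_monomial_image, mem_ideal_span_monomial_image] at hp
  rw [mem_ideal_span_monomial_image]
  intro m hm
  obtain ⟨a, ha, ham⟩ := hp.1 m hm
  obtain ⟨b, hb, hbm⟩ := hp.2 m hm
  obtain ⟨c, hc, hcab⟩ := h a ha b hb
  exact ⟨c, hc, hcab.trans (sup_le ham hbm)⟩

end MvPolynomial

namespace SimpleGraph

variable {k V : Type*} [Field k] (G : SimpleGraph V)

theorem edgeIdeal_eq_span_monomial :
    edgeIdeal k G = Ideal.span ((monomial · (1 : k)) ''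
      {d | ∃ a b, G.Adj a b ∧ d = Finsupp.single a 1 + Finsupp.single b 1}) := by
  rw [edgeIdeal]
  congr 1
  ext p
  simp only [Set.mem_image, X_mul_X_eq_monomial]
  constructor
  · rintro ⟨a, b, hab, rfl⟩
    exact ⟨_, ⟨a, b, hab, rfl⟩, rfl⟩
  · rintro ⟨_, ⟨a, b, hab, rfl⟩, rfl⟩
    exact ⟨a, b, hab, rfl⟩

theorem span_eq_edgeIdeal {S : Set (MvPolynomial V k)}
    (hS : S ⊆ {p | ∃ a b, G.Adj a b ∧ p = X a * X b})
    (hG : ∀ a b, G.Adj a b → X a * X b ∈ S ∨ X b * X a ∈ S) :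
    Ideal.span S = edgeIdeal k G := by
  refine le_antisymm (Ideal.span_mono hS) (Ideal.span_le.2 ?_)
  rintro _ ⟨a, b, hab, rfl⟩
  rcases hG a b hab with h | h
  · exact Ideal.subset_span h
  · rw [mul_comm]
    exact Ideal.subset_span h

theorem edgeIdeal_le_span_X_sup_edgeIdeal_deleteIncidenceSet (u : V) :
    edgeIdeal k G ≤ Ideal.span {X u} ⊔ edgeIdeal k (G.deleteIncidenceSet u) := by
  refine Ideal.span_le.2 ?_
  rintro _ ⟨a, b, hab, rfl⟩
  by_cases ha : a = u
  · subst ha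
    exact Ideal.mem_sup_left (Ideal.mul_mem_right _ _ (Ideal.mem_span_singleton_self _))
  by_cases hb : b = u
  · subst hb
    exact Ideal.mem_sup_left (Ideal.mul_mem_left _ _ (Ideal.mem_span_singleton_self _))
  exact Ideal.mem_sup_right
    (Ideal.subset_span ⟨a, b, deleteIncidenceSet_adj.2 ⟨hab, ha, hb⟩, rfl⟩)

theorem span_X_sup_edgeIdeal_deleteIncidenceSet (u : V) :
    Ideal.span {X u} ⊔ edgeIdeal k (G.deleteIncidenceSet u) =
      Ideal.span ((monomial · (1 : k)) '' ({Finsupp.single u 1} ∪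
        {d | ∃ a b, (G.deleteIncidenceSet u).Adj a b ∧
          d = Finsupp.single a 1 + Finsupp.single b 1})) := by
  rw [Set.image_union, Ideal.span_union, edgeIdeal_eq_span_monomial, Set.image_singleton]
  rfl

theorem span_X_sup_edgeIdeal_deleteIncidenceSet_inf_eq_edgeIdeal {u v : V} (huv : G.Adj u v) :
    (Ideal.span {X u} ⊔ edgeIdeal k (G.deleteIncidenceSet u)) ⊓
      (Ideal.span {X v} ⊔ edgeIdeal k (G.deleteIncidenceSet v)) = edgeIdeal k G := by
  refine le_antisymm ?_ (le_inf (edgeIdeal_le_span_X_sup_edgeIdeal_deleteIncidenceSet G u)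
    (edgeIdeal_le_span_X_sup_edgeIdeal_deleteIncidenceSet G v))
  rw [span_X_sup_edgeIdeal_deleteIncidenceSet, span_X_sup_edgeIdeal_deleteIncidenceSet,
    edgeIdeal_eq_span_monomial]
  apply span_monomial_inf_span_monomial_le
  rintro _ (rfl | ⟨a, b, hab, rfl⟩) _ (rfl | ⟨c, d, hcd, rfl⟩)
  · exact ⟨_, ⟨u, v, huv, rfl⟩, (Finsupp.single_add_single_eq_sup huv.ne 1 1).le⟩
  · exact ⟨_, ⟨c, d, G.deleteIncidenceSet_le v hcd, rfl⟩, le_sup_right⟩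
  all_goals exact ⟨_, ⟨a, b, G.deleteIncidenceSet_le u hab, rfl⟩, le_sup_left⟩

end SimpleGraph

abbrev CycleVertex (n : ℕ) := {i : ℕ // 2 ≤ i ∧ i ≤ n - 1}

def cycleGraphOn (n : ℕ) : SimpleGraph (CycleVertex n) :=
  SimpleGraph.fromRel (fun a b => a.1 + 1 = b.1 ∨ (a.1 = 2 ∧ b.1 = n - 1))

section CycleGraphOn

open SimpleGraph

variable {k : Type*} [Field k] {n : ℕ}

theorem cycleGraphOn_adj_two_last (hn : 4 ≤ n) :
    (cycleGraphOn n).Adj ⟨2, by omega⟩ ⟨n - 1, by omega⟩ := by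
  simp [cycleGraphOn, Subtype.ext_iff]
  omega

theorem span_cycleEdges_eq_edgeIdeal (hn : 4 ≤ n) :
    Ideal.span ({p | ∃ (i : ℕ) (h1 : 2 ≤ i) (h2 : i ≤ n - 2),
        p = X (⟨i, by omega⟩ : CycleVertex n) * X ⟨i + 1, by omega⟩} ∪
      {X ⟨2, by omega⟩ * X ⟨n - 1, by omega⟩}) = edgeIdeal k (cycleGraphOn n) := by
  refine span_eq_edgeIdeal _ ?_ ?_
  · rintro _ (⟨i, h1, h2, rfl⟩ | rfl)
    · exact ⟨_, _, by simp [cycleGraphOn, Subtype.ext_iff], rfl⟩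
    · exact ⟨_, _, cycleGraphOn_adj_two_last hn, rfl⟩
  · rintro ⟨a, ha⟩ ⟨b, hb⟩ hab
    simp only [cycleGraphOn, fromRel_adj, ne_eq, Subtype.ext_iff] at hab
    obtain ⟨-, (rfl | ⟨rfl, rfl⟩) | rfl | ⟨rfl, rfl⟩⟩ := hab
    · exact Or.inl (Or.inl ⟨a, ha.1, by omega, rfl⟩)
    · exact Or.inl (Or.inr rfl)
    · exact Or.inr (Or.inl ⟨b, hb.1, by omega, rfl⟩)
    · exact Or.inr (Or.inr rfl)

theorem span_edges_eq_edgeIdeal_deleteIncidenceSet_two (hn : 3 ≤ n) :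
    Ideal.span {p | ∃ (i : ℕ) (h1 : 3 ≤ i) (h2 : i ≤ n - 2),
        p = X (⟨i, by omega⟩ : CycleVertex n) * X ⟨i + 1, by omega⟩} =
      edgeIdeal k ((cycleGraphOn n).deleteIncidenceSet ⟨2, by omega⟩) := by
  refine span_eq_edgeIdeal _ ?_ ?_
  · rintro _ ⟨i, h1, h2, rfl⟩
    exact ⟨_, _, by simp [cycleGraphOn, deleteIncidenceSet_adj, Subtype.ext_iff]; omega, rfl⟩
  · rintro ⟨a, ha⟩ ⟨b, hb⟩ hab
    simp only [cycleGraphOn, deleteIncidenceSet_adj, fromRel_adj, ne_eq, Subtype.ext_iff] at hab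
    obtain ⟨⟨-, (rfl | ⟨rfl, rfl⟩) | rfl | ⟨rfl, rfl⟩⟩, ha2, hb2⟩ := hab
    · exact Or.inl ⟨a, by omega, by omega, rfl⟩
    · exact absurd rfl ha2
    · exact Or.inr ⟨b, by omega, by omega, rfl⟩
    · exact absurd rfl hb2

theorem span_edges_eq_edgeIdeal_deleteIncidenceSet_last (hn : 3 ≤ n) :
    Ideal.span {p | ∃ (i : ℕ) (h1 : 2 ≤ i) (h2 : i ≤ n - 3),
        p = X (⟨i, by omega⟩ : CycleVertex n) * X ⟨i + 1, by omega⟩} =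
      edgeIdeal k ((cycleGraphOn n).deleteIncidenceSet ⟨n - 1, by omega⟩) := by
  refine span_eq_edgeIdeal _ ?_ ?_
  · rintro _ ⟨i, h1, h2, rfl⟩
    exact ⟨_, _, by simp [cycleGraphOn, deleteIncidenceSet_adj, Subtype.ext_iff]; omega, rfl⟩
  · rintro ⟨a, ha⟩ ⟨b, hb⟩ hab
    simp only [cycleGraphOn, deleteIncidenceSet_adj, fromRel_adj, ne_eq, Subtype.ext_iff] at hab
    obtain ⟨⟨-, (rfl | ⟨rfl, rfl⟩) | rfl | ⟨rfl, rfl⟩⟩, ha2, hb2⟩ := hab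
    · exact Or.inl ⟨a, by omega, by omega, rfl⟩
    · exact absurd rfl hb2
    · exact Or.inr ⟨b, by omega, by omega, rfl⟩
    · exact absurd rfl ha2

end CycleGraphOn

/-- in `R = k[x₂, ..., x_{n-1}]` (`n ≥ 7`), with
`J = (x₂, x₃x₄, ..., x_{n-2}x_{n-1})` and `L = (x₂x₃, ..., x_{n-3}x_{n-2}, x_{n-1})`, one has
`J ∩ L = (x₂x₃, x₃x₄, ..., x_{n-2}x_{n-1}, x₂x_{n-1})`, the edge ideal of the cycle of length
`n - 2` on `x₂, ..., x_{n-1}`. -/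
theorem inter_J_L_eq_cycle_edgeIdeal {k : Type*} [Field k] (n : ℕ) (hn : 7 ≤ n) :
    let σ := {i : ℕ // 2 ≤ i ∧ i ≤ n - 1}
    let J : Ideal (MvPolynomial σ k) :=
      Ideal.span ({X ⟨2, by omega⟩} ∪
        {p | ∃ (i : ℕ) (h1 : 3 ≤ i) (h2 : i ≤ n - 2),
          p = X (⟨i, by omega⟩ : σ) * X (⟨i + 1, by omega⟩ : σ)})
    let L : Ideal (MvPolynomial σ k) :=
      Ideal.span ({X ⟨n - 1, by omega⟩} ∪
        {p | ∃ (i : ℕ) (h1 : 2 ≤ i) (h2 : i ≤ n - 3),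
          p = X (⟨i, by omega⟩ : σ) * X (⟨i + 1, by omega⟩ : σ)})
    let cycEdges : Set (MvPolynomial σ k) :=
      {p | ∃ (i : ℕ) (h1 : 2 ≤ i) (h2 : i ≤ n - 2),
          p = X (⟨i, by omega⟩ : σ) * X (⟨i + 1, by omega⟩ : σ)} ∪
        {X ⟨2, by omega⟩ * X ⟨n - 1, by omega⟩}
    let C : SimpleGraph σ := SimpleGraph.fromRel
      (fun a b => a.1 + 1 = b.1 ∨ (a.1 = 2 ∧ b.1 = n - 1))
    J ⊓ L = Ideal.span cycEdges ∧ Ideal.span cycEdges = edgeIdeal k C := by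
  intro σ J L cycEdges C
  have hC : Ideal.span cycEdges = edgeIdeal k C := span_cycleEdges_eq_edgeIdeal (by omega)
  have hJ : J = Ideal.span {X ⟨2, by omega⟩} ⊔
      edgeIdeal k (C.deleteIncidenceSet ⟨2, by omega⟩) :=
    (Ideal.span_union _ _).trans
      (congrArg _ (span_edges_eq_edgeIdeal_deleteIncidenceSet_two (by omega)))
  have hL : L = Ideal.span {X ⟨n - 1, by omega⟩} ⊔
      edgeIdeal k (C.deleteIncidenceSet ⟨n - 1, by omega⟩) :=
    (Ideal.span_union _ _).trans
      (congrArg _ (span_edges_eq_edgeIdeal_deleteIncidenceSet_last (by omega)))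
  rw [hJ, hL, hC, SimpleGraph.span_X_sup_edgeIdeal_deleteIncidenceSet_inf_eq_edgeIdeal C
    (cycleGraphOn_adj_two_last (by omega))]
  exact ⟨rfl, rfl⟩
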